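/- Let r ≥ 1 and let (v_1,…,v_r) be a system of linear functionals on ℂ[x] with moment matrix M, and let n ≥ 1 be such that Δ_n ≠ 0, where Δ_m is the determinant of the m×m leading principal submatrix of M. If P_n is a monic polynomial of degree n satisfying the type II step-line orthogonality conditions ⟨v_{j+1}, x^k P_n⟩ = 0 for all k ∈ ℕ and 0 ≤ j ≤ r−1 with rk + j < n, then the coefficient of x^{n−1} in P_n equals −Δ̃_n / Δ_n, where Δ̃_n is the determinant of the n×n matrix formed by rows 0,…,n−2, n and columns 0,…,n−1 of M. -/
import Mathlib


open Polynomial Finset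

noncomputable section

/-- A linear functional on `ℂ[x]`. -/
abbrev LF := Polynomial ℂ →ₗ[ℂ] ℂ

/-- The moment matrix of a system of `r` linear functionals (0-indexed:
`v j` is the paper's `v_{j+1}`): entry `(n, r*k+j)` is `⟨v_{j+1}, x^{k+n}⟩`. -/
def momentMatrix (r : ℕ) (v : ℕ → LF) (n ℓ : ℕ) : ℂ :=
  v (ℓ % r) (Polynomial.X ^ (ℓ / r + n))

/-- `Δ_m`: determinant of the `m × m` leading principal submatrix of the
moment matrix of `v`. -/
def Delta (r : ℕ) (v : ℕ → LF) (m : ℕ) : ℂ :=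
  Matrix.det (Matrix.of fun i j : Fin m => momentMatrix r v i j)

/-- `Δ̃_m`: determinant of the `m × m` matrix formed by rows `0,…,m−2, m` and
columns `0,…,m−1` of the moment matrix of `v`. -/
def DeltaT (r : ℕ) (v : ℕ → LF) (m : ℕ) : ℂ :=
  if m = 0 then 0 else
    Matrix.det (Matrix.of fun i j : Fin m =>
      momentMatrix r v (if (i : ℕ) = m - 1 then m else (i : ℕ)) j)

open Matrix in
theorem stmt8 (r : ℕ) (hr : 1 ≤ r) (v : ℕ → LF) (n : ℕ) (hn : 1 ≤ n)
    (hΔ : Delta r v n ≠ 0) (P : Polynomial ℂ)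
    (hmonic : P.Monic) (hdeg : P.natDegree = n)
    (horth : ∀ k j, j < r → r * k + j < n → v j (Polynomial.X ^ k * P) = 0) :
    P.coeff (n - 1) = -DeltaT r v n / Delta r v n := by
  set A : Matrix (Fin n) (Fin n) ℂ := Matrix.of fun i j : Fin n => momentMatrix r v i j with hA
  set x : Fin n → ℂ := fun i => P.coeff i with hx
  set b : Fin n → ℂ := fun j => - momentMatrix r v n j with hb
  have hdetA : A.det = Delta r v n := rfl
  have key : x ᵥ* A = b := by
    funext ℓ
    have h0 := horth ((ℓ : ℕ) / r) ((ℓ : ℕ) % r) (Nat.mod_lt _ hr)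
      (by rw [Nat.div_add_mod]; exact ℓ.2)
    have hexp : v ((ℓ : ℕ) % r) (Polynomial.X ^ ((ℓ : ℕ) / r) * P)
        = ∑ m ∈ Finset.range (n + 1), P.coeff m * v ((ℓ : ℕ) % r)
            (Polynomial.X ^ ((ℓ : ℕ) / r + m)) := by
      conv_lhs => rw [P.as_sum_range' (n + 1) (by omega)]
      rw [Finset.mul_sum, map_sum]
      refine Finset.sum_congr rfl fun m _ => ?_
      rw [← Polynomial.C_mul_X_pow_eq_monomial, ← Polynomial.smul_eq_C_mul, mul_comm,
        smul_mul_assoc, _root_.map_smul, smul_eq_mul,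
        show (Polynomial.X : Polynomial ℂ) ^ m * Polynomial.X ^ ((ℓ : ℕ) / r)
          = Polynomial.X ^ ((ℓ : ℕ) / r + m) by rw [← pow_add, Nat.add_comm]]
    have hc : P.coeff n = 1 := hdeg ▸ hmonic.coeff_natDegree
    rw [h0, Finset.sum_range_succ, hc, one_mul] at hexp
    have hsum : ∑ m ∈ Finset.range n, P.coeff m * v ((ℓ : ℕ) % r)
        (Polynomial.X ^ ((ℓ : ℕ) / r + m)) = - v ((ℓ : ℕ) % r)
        (Polynomial.X ^ ((ℓ : ℕ) / r + n)) := by linear_combination -hexp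
    show (∑ m : Fin n, x m * A m ℓ) = b ℓ
    exact (Fin.sum_univ_eq_sum_range
      (fun m => P.coeff m * momentMatrix r v m ℓ) n).trans hsum
  have hunit : IsUnit A.det := isUnit_iff_ne_zero.mpr (hdetA ▸ hΔ)
  have hxb : x = b ᵥ* A⁻¹ := by
    rw [← key, Matrix.vecMul_vecMul, Matrix.mul_nonsing_inv _ hunit, Matrix.vecMul_one]
  have hcr : A.det • x = Matrix.cramer Aᵀ b := by
    rw [hxb, ← Matrix.det_smul_inv_vecMul_eq_cramer_transpose A b hunit]
  set i : Fin n := ⟨n - 1, by omega⟩ with hi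
  have hdet : (A.updateRow i b).det = - DeltaT r v n := by
    rw [show b = ((-1 : ℂ) • fun j : Fin n => momentMatrix r v n j) from
        funext fun j => by simp [hb], Matrix.det_updateRow_smul]
    have h2 : A.updateRow i (fun j : Fin n => momentMatrix r v n j) =
        Matrix.of (fun i' j : Fin n =>
          momentMatrix r v (if (i' : ℕ) = n - 1 then n else (i' : ℕ)) j) := by
      ext i' j
      by_cases h : i' = i
      · subst h
        rw [Matrix.updateRow_self]
        simp [hi]
      · rw [Matrix.updateRow_ne h]
        have : (i' : ℕ) ≠ n - 1 := fun hc => h (Fin.ext (by simp [hc, hi]))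
        simp [hA, this]
    rw [h2, DeltaT, if_neg (by omega)]
    ring
  have hmain : A.det * x i = - DeltaT r v n := by
    have h3 := congrFun hcr i
    rw [Matrix.cramer_transpose_apply, hdet] at h3
    exact h3
  have hxi : x i = - DeltaT r v n / Delta r v n := by
    rw [eq_div_iff hΔ, ← hdetA, mul_comm]
    exact hmain
  exact hxi
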